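/- Let f be a free map on square matrices over a field, and suppose f(X₁) = f(X₂) for n×n matrices X₁, X₂. Then f applied to the block matrix [[X₁⊕X₂, E],[0, X₁⊕X₂]], where E is the 2n×2n matrix with X₁−X₂ in the upper-right n×n block and zeros elsewhere, equals the block diagonal matrix (f(X₁)⊕f(X₂)) ⊕ (f(X₁)⊕f(X₂)). -/

import Mathlib

/-!
Write `D = X₁ ⊕ X₂` and `P = [[0, 1], [0, 0]]`. Conjugating `D ⊕ D` by the unipotent matrix
`[[1, P], [0, 1]]` yields `[[D, [D, P]], [0, D]]`, and `[D, P] = [[0, X₁ - X₂], [0, 0]]`, so the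
input of the theorem is similar to a direct sum. Hence its image is the same conjugate of
`f D ⊕ f D = (f X₁ ⊕ f X₂) ⊕ (f X₁ ⊕ f X₂)`, whose off-diagonal block `[f D, P]` has
`f X₁ - f X₂ = 0` as its only nonzero block.
-/

namespace Matrix

variable {m n R : Type*} [Fintype m] [DecidableEq m] [Fintype n] [DecidableEq n]

theorem inv_fromBlocks_one_zero_one [CommRing R] (P : Matrix m n R) :
    (fromBlocks 1 P 0 1 : Matrix (m ⊕ n) (m ⊕ n) R)⁻¹ = fromBlocks 1 (-P) 0 1 := by
  simpa using inv_fromBlocks_zero₂₁_of_isUnit_iff (1 : Matrix m m R) P 1 (by simp)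

theorem inv_fromBlocks_one_zero_one_mul_fromBlocks_mul [CommRing R] (A P : Matrix n n R) :
    (fromBlocks 1 P 0 1)⁻¹ * fromBlocks A 0 0 A * fromBlocks 1 P 0 1 =
      fromBlocks A (A * P - P * A) 0 A := by
  rw [inv_fromBlocks_one_zero_one]
  simp [fromBlocks_multiply, sub_eq_add_neg, add_comm]

theorem fromBlocks_mul_sub_mul_fromBlocks [Ring R] (A B : Matrix m m R) :
    fromBlocks A 0 0 B * fromBlocks 0 1 0 0 - fromBlocks 0 1 0 0 * fromBlocks A 0 0 B =
      fromBlocks 0 (A - B) 0 0 := by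
  simp [fromBlocks_multiply, sub_eq_add_neg, fromBlocks_neg, fromBlocks_add]

end Matrix

open Matrix

theorem free_map_fromBlocks_commutator {K : Type} [CommRing K]
    (f : ∀ (I : Type) [Fintype I] [DecidableEq I], Matrix I I K → Matrix I I K)
    (hsum : ∀ (I J : Type) [Fintype I] [DecidableEq I] [Fintype J] [DecidableEq J]
      (A : Matrix I I K) (B : Matrix J J K),
      f (I ⊕ J) (fromBlocks A 0 0 B) = fromBlocks (f I A) 0 0 (f J B))
    (hsim : ∀ (I : Type) [Fintype I] [DecidableEq I] (S A : Matrix I I K), IsUnit S →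
      f I (S⁻¹ * A * S) = S⁻¹ * f I A * S)
    {I : Type} [Fintype I] [DecidableEq I] (A P : Matrix I I K) :
    f (I ⊕ I) (fromBlocks A (A * P - P * A) 0 A) =
      fromBlocks (f I A) (f I A * P - P * f I A) 0 (f I A) := by
  have hunit : IsUnit (fromBlocks 1 P 0 1 : Matrix (I ⊕ I) (I ⊕ I) K) := by simp
  rw [← inv_fromBlocks_one_zero_one_mul_fromBlocks_mul, hsim _ _ _ hunit, hsum,
    inv_fromBlocks_one_zero_one_mul_fromBlocks_mul]

/-- If `f(X₁) = f(X₂)` for a free map `f`, then `f` of the block matrix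
`[[X₁⊕X₂, E],[0, X₁⊕X₂]]` with `E` having `X₁ - X₂` in the upper-right block is
block diagonal `(f(X₁)⊕f(X₂)) ⊕ (f(X₁)⊕f(X₂))`. -/
theorem free_map_equal_values_block (K : Type) [Field K]
    (f : ∀ (I : Type) [Fintype I] [DecidableEq I], Matrix I I K → Matrix I I K)
    (hsum : ∀ (I J : Type) [Fintype I] [DecidableEq I] [Fintype J] [DecidableEq J]
      (A : Matrix I I K) (B : Matrix J J K),
      f (I ⊕ J) (Matrix.fromBlocks A 0 0 B) = Matrix.fromBlocks (f I A) 0 0 (f J B))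
    (hsim : ∀ (I : Type) [Fintype I] [DecidableEq I] (S A : Matrix I I K), IsUnit S →
      f I (S⁻¹ * A * S) = S⁻¹ * f I A * S)
    (n : ℕ) (X₁ X₂ : Matrix (Fin n) (Fin n) K)
    (heq : f (Fin n) X₁ = f (Fin n) X₂) :
    f ((Fin n ⊕ Fin n) ⊕ (Fin n ⊕ Fin n))
        (Matrix.fromBlocks (Matrix.fromBlocks X₁ 0 0 X₂)
          (Matrix.fromBlocks 0 (X₁ - X₂) 0 0) 0 (Matrix.fromBlocks X₁ 0 0 X₂)) =
      Matrix.fromBlocks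
        (Matrix.fromBlocks (f (Fin n) X₁) 0 0 (f (Fin n) X₂)) 0 0
        (Matrix.fromBlocks (f (Fin n) X₁) 0 0 (f (Fin n) X₂)) := by
  have key := free_map_fromBlocks_commutator f hsum hsim (fromBlocks X₁ 0 0 X₂) (fromBlocks 0 1 0 0)
  rw [fromBlocks_mul_sub_mul_fromBlocks, hsum, fromBlocks_mul_sub_mul_fromBlocks, heq, sub_self,
    fromBlocks_zero] at key
  rw [key, heq]
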